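/- For every α with 1 ≤ α < 3/2 there exist n = 3 values 0 < v₁ < v₂ < v₃ and a prior f_𝒟 on them such that no signaling scheme is α-majorized: for every signaling scheme Z there exist a signaling scheme Z' and m ∈ (0,1] with α·PF(s_Z, m) < PF(s_{Z'}, m). -/

import Mathlib

open Finset MeasureTheory

namespace PD

noncomputable section

/-- Complementary CDF of a mass function `fS` at value `v i`. -/
def G {n : ℕ} (v fS : Fin n → ℝ) (i : Fin n) : ℝ :=
  ∑ j ∈ Finset.univ.filter (fun j => v i ≤ v j), fS j

/-- A signal is a probability mass function on the values. -/
def IsSignal {n : ℕ} (fS : Fin n → ℝ) : Prop :=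
  (∀ i, 0 ≤ fS i) ∧ ∑ i, fS i = 1

/-- The index of the seller's price: the smallest index maximizing `v i * G i`. -/
def priceIdx {n : ℕ} [NeZero n] (v fS : Fin n → ℝ) : Fin n :=
  (Finset.univ.filter (fun i => ∀ j, v j * G v fS j ≤ v i * G v fS i)).min' (by
    haveI : Nonempty (Fin n) := ⟨⟨0, Nat.pos_of_ne_zero (NeZero.ne n)⟩⟩
    obtain ⟨b, _, hb⟩ := Finset.exists_max_image (Finset.univ : Finset (Fin n))
      (fun i => v i * G v fS i) Finset.univ_nonempty
    exact ⟨b, Finset.mem_filter.mpr ⟨Finset.mem_univ _, fun j => hb j (Finset.mem_univ _)⟩⟩)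

/-- Consumer surplus of value `v i` under signal `fS`. -/
def cs {n : ℕ} [NeZero n] (v fS : Fin n → ℝ) (i : Fin n) : ℝ :=
  if v (priceIdx v fS) ≤ v i then v i - v (priceIdx v fS) else 0

/-- Revenue of a signal: the maximum of `v i * G i`. -/
def revSig {n : ℕ} [NeZero n] (v fS : Fin n → ℝ) : ℝ :=
  Finset.univ.sup' (by
    haveI : Nonempty (Fin n) := ⟨⟨0, Nat.pos_of_ne_zero (NeZero.ne n)⟩⟩
    exact Finset.univ_nonempty) (fun i => v i * G v fS i)

/-- A signaling scheme for prior mass function `f`. -/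
structure Scheme (n : ℕ) (f : Fin n → ℝ) where
  Q : ℕ
  sig : Fin Q → Fin n → ℝ
  wt : Fin Q → ℝ
  sig_isSignal : ∀ q, IsSignal (sig q)
  wt_nonneg : ∀ q, 0 ≤ wt q
  wt_sum : ∑ q, wt q = 1
  bayes : ∀ i, ∑ q, wt q * sig q i = f i

/-- Expected consumer surplus of value `v i` under scheme `Z`. -/
def csZ {n : ℕ} [NeZero n] (v f : Fin n → ℝ) (Z : Scheme n f) (i : Fin n) : ℝ :=
  ∑ q, cs v (Z.sig q) i * (Z.wt q * Z.sig q i / f i)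

/-- Expected revenue of a scheme. -/
def revZ {n : ℕ} [NeZero n] (v : Fin n → ℝ) {f : Fin n → ℝ} (Z : Scheme n f) : ℝ :=
  ∑ q, Z.wt q * revSig v (Z.sig q)

/-- A scheme is efficient if on every positive-weight signal, the smallest value
in the support maximizes `v * G`. -/
def Efficient {n : ℕ} (v : Fin n → ℝ) {f : Fin n → ℝ} (Z : Scheme n f) : Prop :=
  ∀ q, 0 < Z.wt q → ∀ i, (0 < Z.sig q i ∧ ∀ j, 0 < Z.sig q j → i ≤ j) →
    ∀ j, v j * G v (Z.sig q) j ≤ v i * G v (Z.sig q) i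

/-- A scheme is monotone if higher values get (weakly) higher expected surplus. -/
def MonotoneScheme {n : ℕ} [NeZero n] (v f : Fin n → ℝ) (Z : Scheme n f) : Prop :=
  ∀ i j : Fin n, v i < v j → csZ v f Z i ≤ csZ v f Z j

/-- A scheme is buyer-optimal if the total expected consumer surplus equals the
expected value minus the Myerson revenue. -/
def BuyerOptimal {n : ℕ} [NeZero n] (v f : Fin n → ℝ) (Z : Scheme n f) : Prop :=
  ∑ i, f i * csZ v f Z i = (∑ i, f i * v i) - revSig v f

/-- The surplus-mass step function of a scheme: equal to `csZ i` on the quantile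
interval `(F(v_{i-1}), F(v_i)]`. -/
def smf {n : ℕ} [NeZero n] (v f : Fin n → ℝ) (Z : Scheme n f) (x : ℝ) : ℝ :=
  ∑ i, if (∑ j ∈ Finset.univ.filter (fun j => j < i), f j) < x ∧
          x ≤ ∑ j ∈ Finset.univ.filter (fun j => j ≤ i), f j
       then csZ v f Z i else 0

/-- Sorted `m`-prefix sum of `g` on `(0,1]`: the infimum of `∫_T g` over
(measurable) subsets `T` of `(0,1]` of total length `m`. -/
def PF (g : ℝ → ℝ) (m : ℝ) : ℝ :=
  sInf { r : ℝ | ∃ T : Set ℝ, T ⊆ Set.Ioc 0 1 ∧ MeasurableSet T ∧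
    volume T = ENNReal.ofReal m ∧ r = ∫ x in T, g x }

/-- Integration `m`-prefix sum of `g`: `∫₀^m g`. -/
def PFV (g : ℝ → ℝ) (m : ℝ) : ℝ := ∫ x in Set.Ioc (0:ℝ) m, g x

/-- A singleton signal puts all mass on one value. -/
def IsSingleton {n : ℕ} (fS : Fin n → ℝ) : Prop :=
  ∃ i : Fin n, fS = fun j => if j = i then 1 else 0

/-- An equal-revenue binary signal on `v i < v j` puts mass `1 - v i / v j` on
`v i` and `v i / v j` on `v j`. -/
def IsEqRevBinary {n : ℕ} (v : Fin n → ℝ) (fS : Fin n → ℝ) : Prop :=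
  ∃ i j : Fin n, v i < v j ∧
    fS = fun l => if l = i then 1 - v i / v j else if l = j then v i / v j else 0

/-- `i` is the smallest value in the support of `fS`. -/
def MinSupp {n : ℕ} (fS : Fin n → ℝ) (i : Fin n) : Prop :=
  0 < fS i ∧ ∀ j, 0 < fS j → i ≤ j

end

/-
Take values `1 < 11/10 < 3/2` with prior masses `7/400, 1/4, 293/400`, so that the three
quantile blocks are `(0, 7/400]`, `(7/400, 107/400]` and `(107/400, 1]`. Grouping the signals
of a scheme by the price they induce, revenue maximisation bounds how much mass of the upper
values can sit at low prices, which gives `16 f₂ cs₂ + f₃ cs₃ ≤ 29/80` for every scheme. One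
scheme of equal-revenue signals gives the middle block surplus `7/100`, so its prefix sum at
`m = 107/400` is `7/400`; another reaches total surplus `117/400`. By the trade-off every scheme
has either `f₂ cs₂ ≤ 7/600` or total surplus at most `3/16`, and `(3/2)·(7/600) = 7/400`,
`(3/2)·(3/16) < 117/400`.
-/

section Price

variable {n : ℕ} [NeZero n] {v : Fin n → ℝ}

lemma priceIdx_spec (v fS : Fin n → ℝ) (j : Fin n) :
    v j * G v fS j ≤ v (priceIdx v fS) * G v fS (priceIdx v fS) :=
  (Finset.mem_filter.mp (Finset.min'_mem
    (Finset.univ.filter fun i => ∀ j, v j * G v fS j ≤ v i * G v fS i) _)).2 j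

lemma priceIdx_eq_of_lt {fS : Fin n → ℝ} {i : Fin n}
    (hmax : ∀ j, v j * G v fS j ≤ v i * G v fS i)
    (hlt : ∀ j < i, v j * G v fS j < v i * G v fS i) : priceIdx v fS = i := by
  refine le_antisymm (Finset.min'_le _ _ (Finset.mem_filter.mpr ⟨Finset.mem_univ _, hmax⟩))
    (not_lt.mp fun h => ?_)
  exact (hlt _ h).not_ge (priceIdx_spec v fS i)

lemma cs_nonneg (v fS : Fin n → ℝ) (i : Fin n) : 0 ≤ cs v fS i := by
  unfold cs
  split_ifs with h
  · exact sub_nonneg.mpr h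
  · exact le_rfl

lemma cs_zero_of_monotone (hv : Monotone v) (fS : Fin n → ℝ) : cs v fS 0 = 0 := by
  unfold cs
  split_ifs with h
  · exact sub_eq_zero.mpr (le_antisymm (hv (Fin.zero_le _)) h)
  · rfl

end Price

section Scheme

variable {n : ℕ} {v f : Fin n → ℝ}

lemma Scheme.wt_mul_sig_nonneg (Z : Scheme n f) (q : Fin Z.Q) (i : Fin n) :
    0 ≤ Z.wt q * Z.sig q i :=
  mul_nonneg (Z.wt_nonneg q) ((Z.sig_isSignal q).1 i)

lemma Scheme.prior_nonneg (Z : Scheme n f) (i : Fin n) : 0 ≤ f i :=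
  Z.bayes i ▸ Finset.sum_nonneg fun q _ => Z.wt_mul_sig_nonneg q i

variable [NeZero n]

lemma csZ_nonneg (Z : Scheme n f) (i : Fin n) : 0 ≤ csZ v f Z i :=
  Finset.sum_nonneg fun q _ =>
    mul_nonneg (cs_nonneg _ _ _) (div_nonneg (Z.wt_mul_sig_nonneg q i) (Z.prior_nonneg i))

lemma csZ_zero_of_monotone (hv : Monotone v) (Z : Scheme n f) : csZ v f Z 0 = 0 :=
  Finset.sum_eq_zero fun q _ => by rw [cs_zero_of_monotone hv, zero_mul]

noncomputable def priceMass (v : Fin n → ℝ) (Z : Scheme n f) (k j : Fin n) : ℝ :=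
  ∑ q with priceIdx v (Z.sig q) = k, Z.wt q * Z.sig q j

lemma priceMass_nonneg (Z : Scheme n f) (k j : Fin n) : 0 ≤ priceMass v Z k j :=
  Finset.sum_nonneg fun q _ => Z.wt_mul_sig_nonneg q j

lemma sum_priceMass (Z : Scheme n f) (j : Fin n) : ∑ k, priceMass v Z k j = f j := by
  rw [← Z.bayes j]
  exact Finset.sum_fiberwise _ _ _

lemma G_priceMass (Z : Scheme n f) (k i : Fin n) :
    G v (priceMass v Z k) i = ∑ q with priceIdx v (Z.sig q) = k, Z.wt q * G v (Z.sig q) i := by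
  simp only [G, priceMass, Finset.mul_sum]
  exact Finset.sum_comm

/-- Revenue is linear in the signal, so the seller's optimality on each signal priced at `v k`
passes to their aggregate. -/
lemma priceMass_revenue_le (Z : Scheme n f) (k i : Fin n) :
    v i * G v (priceMass v Z k) i ≤ v k * G v (priceMass v Z k) k := by
  simp only [G_priceMass, Finset.mul_sum]
  refine Finset.sum_le_sum fun q hq => ?_
  obtain rfl := (Finset.mem_filter.mp hq).2
  rw [mul_left_comm, mul_left_comm (v _)]
  exact mul_le_mul_of_nonneg_left (priceIdx_spec v (Z.sig q) i) (Z.wt_nonneg q)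

lemma mul_csZ_eq_sum_priceMass (Z : Scheme n f) {j : Fin n} (hj : f j ≠ 0) :
    f j * csZ v f Z j =
      ∑ k, (if v k ≤ v j then v j - v k else 0) * priceMass v Z k j := by
  simp only [priceMass, Finset.mul_sum]
  rw [csZ, Finset.mul_sum, ← Finset.sum_fiberwise Finset.univ (fun q => priceIdx v (Z.sig q))]
  refine Finset.sum_congr rfl fun k _ => Finset.sum_congr rfl fun q hq => ?_
  rw [cs, (Finset.mem_filter.mp hq).2]
  field_simp

end Scheme

section PrefixSum

variable {g : ℝ → ℝ} {m : ℝ}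

lemma integrable_indicator_Ioc_const (a b c : ℝ) :
    Integrable ((Set.Ioc a b).indicator fun _ => c) :=
  (integrable_indicator_iff measurableSet_Ioc).2 (integrableOn_const measure_Ioc_lt_top.ne)

lemma PFV_mem_PF_candidates (hm1 : m ≤ 1) :
    ∃ T : Set ℝ, T ⊆ Set.Ioc 0 1 ∧ MeasurableSet T ∧ volume T = ENNReal.ofReal m ∧
      PFV g m = ∫ x in T, g x :=
  ⟨Set.Ioc 0 m, Set.Ioc_subset_Ioc_right hm1, measurableSet_Ioc, by
    rw [Real.volume_Ioc, sub_zero], rfl⟩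

lemma PF_le_PFV (hg : ∀ x ∈ Set.Ioc 0 1, 0 ≤ g x) (hm1 : m ≤ 1) : PF g m ≤ PFV g m := by
  refine csInf_le ⟨0, ?_⟩ (PFV_mem_PF_candidates hm1)
  rintro r ⟨T, hT, hTm, -, rfl⟩
  exact setIntegral_nonneg hTm fun x hx => hg x (hT hx)

/-- A set of length `m` in `(0, 1]` spends length at least `m - a` in `(a, 1]`. -/
lemma le_PF_of_le_on_Ioc {a c : ℝ} (hg : IntegrableOn g (Set.Ioc 0 1))
    (hg0 : ∀ x ∈ Set.Ioc 0 1, 0 ≤ g x) (hgc : ∀ x ∈ Set.Ioc a 1, c ≤ g x) (hc : 0 ≤ c)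
    (ha : 0 ≤ a) (hm0 : 0 ≤ m) (hm1 : m ≤ 1) : c * (m - a) ≤ PF g m := by
  refine le_csInf ⟨_, PFV_mem_PF_candidates hm1⟩ ?_
  rintro r ⟨T, hT, hTm, hTvol, rfl⟩
  have hvol : m ≤ volume.real (T ∩ Set.Ioc a 1) + a := calc
    m = volume.real T := by rw [measureReal_def, hTvol, ENNReal.toReal_ofReal hm0]
    _ ≤ volume.real (T ∩ Set.Ioc a 1 ∪ Set.Ioc 0 a) := by
      refine measureReal_mono (fun x hx => ?_) (measure_union_lt_top
        (measure_inter_lt_top_of_right_ne_top measure_Ioc_lt_top.ne) measure_Ioc_lt_top).ne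
      by_cases hxa : a < x
      · exact Or.inl ⟨hx, hxa, (hT hx).2⟩
      · exact Or.inr ⟨(hT hx).1, not_lt.mp hxa⟩
    _ ≤ volume.real (T ∩ Set.Ioc a 1) + a := by
      grw [measureReal_union_le, Real.volume_real_Ioc_of_le ha, sub_zero]
  calc c * (m - a) ≤ c * volume.real (T ∩ Set.Ioc a 1) :=
        mul_le_mul_of_nonneg_left (by linarith) hc
    _ = ∫ x in T, (Set.Ioc a 1).indicator (fun _ => c) x := by
      rw [setIntegral_indicator measurableSet_Ioc, setIntegral_const, smul_eq_mul, mul_comm]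
    _ ≤ ∫ x in T, g x := by
      refine setIntegral_mono_on (integrable_indicator_Ioc_const _ _ _).integrableOn
        (hg.mono_set hT) hTm fun x hx => ?_
      by_cases hxa : x ∈ Set.Ioc a 1
      · rw [Set.indicator_of_mem hxa]
        exact hgc x hxa
      · rw [Set.indicator_of_notMem hxa]
        exact hg0 x (hT hx)

end PrefixSum

section SurplusMass

variable {n : ℕ} {v f : Fin n → ℝ}

def quantileIoc (f : Fin n → ℝ) (i : Fin n) : Set ℝ :=
  Set.Ioc (∑ j with j < i, f j) (∑ j with j ≤ i, f j)

lemma integrable_indicator_quantileIoc_const (f : Fin n → ℝ) (i : Fin n) (c : ℝ) :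
    Integrable ((quantileIoc f i).indicator fun _ => c) :=
  integrable_indicator_Ioc_const _ _ _

variable [NeZero n]

lemma smf_eq_sum_indicator (Z : Scheme n f) :
    smf v f Z = fun x => ∑ i, (quantileIoc f i).indicator (fun _ => csZ v f Z i) x := by
  funext x
  simp only [smf, quantileIoc, Set.indicator_apply, Set.mem_Ioc]

lemma integrable_smf (Z : Scheme n f) : Integrable (smf v f Z) := by
  rw [smf_eq_sum_indicator]
  exact integrable_finsetSum _ fun i _ => integrable_indicator_quantileIoc_const f i _

lemma setIntegral_smf (Z : Scheme n f) {s : Set ℝ} :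
    ∫ x in s, smf v f Z x = ∑ i, csZ v f Z i * volume.real (s ∩ quantileIoc f i) := by
  rw [smf_eq_sum_indicator, integral_finsetSum _ fun i _ =>
    (integrable_indicator_quantileIoc_const f i _).restrict]
  refine Finset.sum_congr rfl fun i _ => ?_
  rw [quantileIoc, setIntegral_indicator measurableSet_Ioc, setIntegral_const, smul_eq_mul,
    mul_comm]

lemma smf_nonneg (Z : Scheme n f) (x : ℝ) : 0 ≤ smf v f Z x := by
  rw [smf_eq_sum_indicator]
  exact Finset.sum_nonneg fun i _ => Set.indicator_nonneg (fun _ _ => csZ_nonneg Z i) x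

lemma csZ_le_smf (Z : Scheme n f) {i : Fin n} {x : ℝ} (hx : x ∈ quantileIoc f i) :
    csZ v f Z i ≤ smf v f Z x := by
  rw [smf_eq_sum_indicator]
  calc csZ v f Z i = (quantileIoc f i).indicator (fun _ => csZ v f Z i) x :=
        (Set.indicator_of_mem hx (fun _ => csZ v f Z i)).symm
    _ ≤ _ := Finset.single_le_sum
        (fun j _ => Set.indicator_nonneg (fun _ _ => csZ_nonneg Z j) x) (Finset.mem_univ i)

end SurplusMass

section Example

attribute [local simp] Matrix.cons_val_two Matrix.vecHead Matrix.vecTail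

noncomputable def vv : Fin 3 → ℝ := ![1, 11/10, 3/2]

noncomputable def ff : Fin 3 → ℝ := ![7/400, 1/4, 293/400]

@[simp] lemma vv_zero : vv 0 = 1 := rfl
@[simp] lemma vv_one : vv 1 = 11/10 := rfl
@[simp] lemma vv_two : vv 2 = 3/2 := rfl
@[simp] lemma ff_zero : ff 0 = 7/400 := rfl
@[simp] lemma ff_one : ff 1 = 1/4 := rfl
@[simp] lemma ff_two : ff 2 = 293/400 := rfl

lemma vv_strictMono : StrictMono vv := by
  refine Fin.strictMono_iff_lt_succ.mpr fun i => ?_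
  fin_cases i <;> norm_num

lemma ff_pos (i : Fin 3) : 0 < ff i := by
  fin_cases i <;> norm_num [ff]

lemma G_vv (s : Fin 3 → ℝ) :
    G vv s 0 = s 0 + s 1 + s 2 ∧ G vv s 1 = s 1 + s 2 ∧ G vv s 2 = s 2 := by
  simp only [G, Finset.sum_filter, Fin.sum_univ_three]
  norm_num

lemma quantileIoc_ff :
    quantileIoc ff 0 = Set.Ioc 0 (7/400) ∧ quantileIoc ff 1 = Set.Ioc (7/400) (107/400) ∧
      quantileIoc ff 2 = Set.Ioc (107/400) 1 := by
  simp only [quantileIoc, Finset.sum_filter, Fin.sum_univ_three]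
  norm_num [Fin.le_def, Fin.lt_def, Fin.ext_iff]

/-- A price of `1` caps the mass of the two upper values priced there by `10 f₁`, and a price of
`11/10` caps the top-value mass priced there by `11/4` times the middle-value mass priced there. -/
lemma surplus_tradeoff (Z : Scheme 3 ff) :
    16 * (ff 1 * csZ vv ff Z 1) + ff 2 * csZ vv ff Z 2 ≤ 29/80 := by
  have hcs1 : ff 1 * csZ vv ff Z 1 = priceMass vv Z 0 1 / 10 := by
    rw [mul_csZ_eq_sum_priceMass Z (ff_pos 1).ne', Fin.sum_univ_three]
    norm_num
    ring
  have hcs2 : ff 2 * csZ vv ff Z 2 =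
      priceMass vv Z 0 2 / 2 + 2/5 * priceMass vv Z 1 2 := by
    rw [mul_csZ_eq_sum_priceMass Z (ff_pos 2).ne', Fin.sum_univ_three]
    norm_num
    ring
  have hrev0 := priceMass_revenue_le (v := vv) Z 0 1
  have hrev1 := priceMass_revenue_le (v := vv) Z 1 2
  have hprior0 := sum_priceMass (v := vv) Z 0
  have hprior1 := sum_priceMass (v := vv) Z 1
  simp only [G_vv, vv_zero, vv_one, vv_two] at hrev0 hrev1
  simp only [Fin.sum_univ_three, ff_zero, ff_one] at hprior0 hprior1
  linarith [priceMass_nonneg (v := vv) Z 1 0, priceMass_nonneg (v := vv) Z 2 0,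
    priceMass_nonneg (v := vv) Z 2 1]

-- Equal-revenue signals: all prices in the support earn the same; the seller takes the lowest.
noncomputable def eqRev01 : Fin 3 → ℝ := ![1/11, 10/11, 0]
noncomputable def eqRev02 : Fin 3 → ℝ := ![1/3, 0, 2/3]
noncomputable def eqRev12 : Fin 3 → ℝ := ![0, 4/15, 11/15]
noncomputable def dirac2 : Fin 3 → ℝ := ![0, 0, 1]

lemma priceIdx_eqRev01 : priceIdx vv eqRev01 = 0 :=
  priceIdx_eq_of_lt
    (fun j => by fin_cases j <;> simp only [Fin.reduceFinMk] <;> norm_num [G_vv, eqRev01])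
    (fun j hj => absurd hj (Fin.not_lt_zero j))

lemma priceIdx_eqRev02 : priceIdx vv eqRev02 = 0 :=
  priceIdx_eq_of_lt
    (fun j => by fin_cases j <;> simp only [Fin.reduceFinMk] <;> norm_num [G_vv, eqRev02])
    (fun j hj => absurd hj (Fin.not_lt_zero j))

lemma priceIdx_eqRev12 : priceIdx vv eqRev12 = 1 :=
  priceIdx_eq_of_lt
    (fun j => by fin_cases j <;> simp only [Fin.reduceFinMk] <;> norm_num [G_vv, eqRev12])
    (fun j hj => by
      obtain rfl : j = 0 := by omega
      norm_num [G_vv, eqRev12])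

lemma priceIdx_dirac2 : priceIdx vv dirac2 = 2 :=
  priceIdx_eq_of_lt
    (fun j => by fin_cases j <;> simp only [Fin.reduceFinMk] <;> norm_num [G_vv, dirac2])
    (fun j hj => by
      obtain rfl | rfl : j = 0 ∨ j = 1 := by omega
      all_goals norm_num [G_vv, dirac2])

noncomputable def middleSurplusScheme : Scheme 3 ff where
  Q := 3
  sig := ![eqRev01, eqRev12, dirac2]
  wt := ![77/400, 9/32, 421/800]
  sig_isSignal q := by
    fin_cases q <;> refine ⟨fun i => ?_, ?_⟩ <;> (try fin_cases i) <;>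
      norm_num [Fin.sum_univ_three, eqRev01, eqRev12, dirac2]
  wt_nonneg q := by fin_cases q <;> norm_num
  wt_sum := by norm_num [Fin.sum_univ_three]
  bayes i := by
    fin_cases i <;> simp only [Fin.reduceFinMk] <;>
      norm_num [Fin.sum_univ_three, eqRev01, eqRev12, dirac2]

noncomputable def totalSurplusScheme : Scheme 3 ff where
  Q := 3
  sig := ![eqRev02, eqRev12, dirac2]
  wt := ![21/400, 15/16, 1/100]
  sig_isSignal q := by
    fin_cases q <;> refine ⟨fun i => ?_, ?_⟩ <;> (try fin_cases i) <;>
      norm_num [Fin.sum_univ_three, eqRev02, eqRev12, dirac2]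
  wt_nonneg q := by fin_cases q <;> norm_num
  wt_sum := by norm_num [Fin.sum_univ_three]
  bayes i := by
    fin_cases i <;> simp only [Fin.reduceFinMk] <;>
      norm_num [Fin.sum_univ_three, eqRev02, eqRev12, dirac2]

lemma csZ_middleSurplusScheme :
    csZ vv ff middleSurplusScheme 1 = 7/100 ∧ csZ vv ff middleSurplusScheme 2 = 33/293 := by
  constructor <;> erw [csZ, Fin.sum_univ_three] <;>
    simp [middleSurplusScheme, cs, priceIdx_eqRev01, priceIdx_eqRev12, priceIdx_dirac2] <;>
    norm_num [eqRev01, eqRev12, dirac2]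

lemma csZ_totalSurplusScheme : csZ vv ff totalSurplusScheme 2 = 117/293 := by
  erw [csZ, Fin.sum_univ_three]
  simp [totalSurplusScheme, cs, priceIdx_eqRev02, priceIdx_eqRev12, priceIdx_dirac2]
  norm_num [eqRev02, eqRev12, dirac2]

lemma PFV_smf_ff (Z : Scheme 3 ff) :
    PFV (smf vv ff Z) (107/400) = ff 1 * csZ vv ff Z 1 ∧
      PFV (smf vv ff Z) 1 = ff 1 * csZ vv ff Z 1 + ff 2 * csZ vv ff Z 2 := by
  obtain ⟨h0, h1, h2⟩ := quantileIoc_ff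
  simp only [PFV, setIntegral_smf, Fin.sum_univ_three, h0, h1, h2,
    csZ_zero_of_monotone vv_strictMono.monotone, Set.Ioc_inter_Ioc, Real.volume_real_Ioc]
  norm_num
  constructor <;> ring

lemma PF_middleSurplusScheme : 7/400 ≤ PF (smf vv ff middleSurplusScheme) (107/400) := by
  obtain ⟨-, h1, h2⟩ := quantileIoc_ff
  obtain ⟨hcs1, hcs2⟩ := csZ_middleSurplusScheme
  have hgc : ∀ x ∈ Set.Ioc (7/400 : ℝ) 1, 7/100 ≤ smf vv ff middleSurplusScheme x := by
    rintro x ⟨hx0, hx1⟩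
    rcases le_or_gt x (107/400) with hx | hx
    · exact hcs1 ▸ csZ_le_smf _ (by rw [h1]; exact ⟨hx0, hx⟩)
    · exact le_trans (by norm_num) (hcs2 ▸ csZ_le_smf _ (by rw [h2]; exact ⟨hx, hx1⟩))
  have := le_PF_of_le_on_Ioc (integrable_smf _).integrableOn (fun x _ => smf_nonneg _ x) hgc
    (by norm_num) (by norm_num) (m := 107/400) (by norm_num) (by norm_num)
  linarith

lemma PF_totalSurplusScheme : 117/400 ≤ PF (smf vv ff totalSurplusScheme) 1 := by
  have hgc : ∀ x ∈ Set.Ioc (107/400 : ℝ) 1, 117/293 ≤ smf vv ff totalSurplusScheme x :=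
    fun x hx => csZ_totalSurplusScheme ▸ csZ_le_smf _ (quantileIoc_ff.2.2 ▸ hx)
  have := le_PF_of_le_on_Ioc (integrable_smf _).integrableOn (fun x _ => smf_nonneg _ x) hgc
    (by norm_num) (by norm_num) (m := 1) (by norm_num) le_rfl
  linarith

end Example

theorem stmt18 (α : ℝ) (hα : 1 ≤ α) (hα' : α < 3 / 2) :
    ∃ (v f : Fin 3 → ℝ), StrictMono v ∧ (∀ i, 0 < v i) ∧
      (∀ i, 0 < f i) ∧ (∑ i, f i = 1) ∧
      ∀ Z : Scheme 3 f,
        ∃ (Z' : Scheme 3 f) (m : ℝ), 0 < m ∧ m ≤ 1 ∧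
          α * PF (smf v f Z) m < PF (smf v f Z') m := by
  refine ⟨vv, ff, vv_strictMono, fun i => by fin_cases i <;> norm_num [vv], ff_pos,
    by norm_num [Fin.sum_univ_three], fun Z => ?_⟩
  have hsmf : ∀ x ∈ Set.Ioc (0 : ℝ) 1, 0 ≤ smf vv ff Z x := fun x _ => smf_nonneg Z x
  obtain ⟨hPFV, hPFV_one⟩ := PFV_smf_ff Z
  by_cases hmid : ff 1 * csZ vv ff Z 1 ≤ 7/600
  · refine ⟨middleSurplusScheme, 107/400, by norm_num, by norm_num, ?_⟩
    have hPF : PF (smf vv ff Z) (107/400) ≤ 7/600 :=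
      (PF_le_PFV hsmf (by norm_num)).trans (hPFV ▸ hmid)
    calc α * PF (smf vv ff Z) (107/400) ≤ α * (7/600) :=
          mul_le_mul_of_nonneg_left hPF (by linarith)
      _ < 7/400 := by linarith
      _ ≤ _ := PF_middleSurplusScheme
  · refine ⟨totalSurplusScheme, 1, one_pos, le_rfl, ?_⟩
    have htradeoff := surplus_tradeoff Z
    have hPF : PF (smf vv ff Z) 1 ≤ 3/16 :=
      (PF_le_PFV hsmf le_rfl).trans (by rw [hPFV_one]; linarith)
    calc α * PF (smf vv ff Z) 1 ≤ α * (3/16) := mul_le_mul_of_nonneg_left hPF (by linarith)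
      _ < 117/400 := by linarith
      _ ≤ _ := PF_totalSurplusScheme

end PD
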